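/- The vectors ℓ₁, ℓ₂, ℓ₃ satisfy: (i) (I − P_k)ℓ_k = 0 for k = 1, 2, 3, and (ii) Σ_{j ≠ k} (P_k ℓ_j + P_j ℓ_k)/(z_k − z_j) = 0 for k = 1, 2, 3. -/
import Mathlib


noncomputable section
open Matrix Polynomial

/-- The 4×4 permutation matrix (over ℂ) of the transposition exchanging coordinates `i` and `j`. -/
def permMat (i j : Fin 4) : Matrix (Fin 4) (Fin 4) ℂ :=
  Matrix.of fun k l => if l = Equiv.swap i j k then 1 else 0

/-- `P₁ = P(1,2)`. -/
def P1 : Matrix (Fin 4) (Fin 4) ℂ := permMat 0 1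
/-- `P₂ = P(1,3)`. -/
def P2 : Matrix (Fin 4) (Fin 4) ℂ := permMat 0 2
/-- `P₃ = P(1,4)`. -/
def P3 : Matrix (Fin 4) (Fin 4) ℂ := permMat 0 3

/-- `A(z) = Σ_{k=1}^{3} P_k/(z − z_k)`. -/
def Amat (z₁ z₂ z₃ z : ℂ) : Matrix (Fin 4) (Fin 4) ℂ :=
  (z - z₁)⁻¹ • P1 + (z - z₂)⁻¹ • P2 + (z - z₃)⁻¹ • P3

/-- `α₁ = (z₃ − z₂)⁻¹`. -/
def al1 (z₁ z₂ z₃ : ℂ) : ℂ := (z₃ - z₂)⁻¹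
/-- `α₂ = (z₁ − z₃)⁻¹`. -/
def al2 (z₁ z₂ z₃ : ℂ) : ℂ := (z₁ - z₃)⁻¹
/-- `α₃ = (z₂ − z₁)⁻¹`. -/
def al3 (z₁ z₂ z₃ : ℂ) : ℂ := (z₂ - z₁)⁻¹
/-- `a = −α₁/α₃`. -/
def aY4 (z₁ z₂ z₃ : ℂ) : ℂ := -(al1 z₁ z₂ z₃) / al3 z₁ z₂ z₃
/-- `c = α₁²/(α₂α₃)`. -/
def cY4 (z₁ z₂ z₃ : ℂ) : ℂ := (al1 z₁ z₂ z₃) ^ 2 / (al2 z₁ z₂ z₃ * al3 z₁ z₂ z₃)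
/-- `d = −(α₁²/(α₂α₃³))·(α₁α₂ + α₃²)`. -/
def dY4 (z₁ z₂ z₃ : ℂ) : ℂ :=
  -((al1 z₁ z₂ z₃) ^ 2 / (al2 z₁ z₂ z₃ * (al3 z₁ z₂ z₃) ^ 3))
    * (al1 z₁ z₂ z₃ * al2 z₁ z₂ z₃ + (al3 z₁ z₂ z₃) ^ 2)
/-- `e = 1 + α₁/α₂`. -/
def eY4 (z₁ z₂ z₃ : ℂ) : ℂ := 1 + al1 z₁ z₂ z₃ / al2 z₁ z₂ z₃
/-- `b = −(α₃/α₂)·d`. -/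
def bY4 (z₁ z₂ z₃ : ℂ) : ℂ := -(al3 z₁ z₂ z₃ / al2 z₁ z₂ z₃) * dY4 z₁ z₂ z₃
/-- `ℓ₁ = α₁·(0,0,1,a)ᵀ`. -/
def lv1 (z₁ z₂ z₃ : ℂ) : Fin 4 → ℂ := al1 z₁ z₂ z₃ • ![0, 0, 1, aY4 z₁ z₂ z₃]
/-- `ℓ₂ = α₂·(0,b,0,c)ᵀ`. -/
def lv2 (z₁ z₂ z₃ : ℂ) : Fin 4 → ℂ := al2 z₁ z₂ z₃ • ![0, bY4 z₁ z₂ z₃, 0, cY4 z₁ z₂ z₃]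
/-- `ℓ₃ = α₃·(0,d,e,0)ᵀ`. -/
def lv3 (z₁ z₂ z₃ : ℂ) : Fin 4 → ℂ := al3 z₁ z₂ z₃ • ![0, dY4 z₁ z₂ z₃, eY4 z₁ z₂ z₃, 0]
/-- `Y₄(z) = Σ_{k=1}^{3} ℓ_k/(z − z_k)`. -/
def Y4 (z₁ z₂ z₃ z : ℂ) : Fin 4 → ℂ :=
  (z - z₁)⁻¹ • lv1 z₁ z₂ z₃ + (z - z₂)⁻¹ • lv2 z₁ z₂ z₃ + (z - z₃)⁻¹ • lv3 z₁ z₂ z₃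

theorem permMat_mulVec (i j : Fin 4) (v : Fin 4 → ℂ) :
    permMat i j *ᵥ v = fun k => v (Equiv.swap i j k) := by
  funext k
  simp [permMat, mulVec, dotProduct, eq_comm]

set_option maxHeartbeats 4000000 in
/-- the vectors `ℓ₁, ℓ₂, ℓ₃` satisfy conditions (2.10) and (2.11). -/
theorem stmt_13 (z₁ z₂ z₃ : ℂ) (h12 : z₁ ≠ z₂) (h13 : z₁ ≠ z₃) (h23 : z₂ ≠ z₃) :
    ((1 - P1) *ᵥ lv1 z₁ z₂ z₃ = 0 ∧ (1 - P2) *ᵥ lv2 z₁ z₂ z₃ = 0 ∧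
      (1 - P3) *ᵥ lv3 z₁ z₂ z₃ = 0) ∧
    ((z₁ - z₂)⁻¹ • (P1 *ᵥ lv2 z₁ z₂ z₃ + P2 *ᵥ lv1 z₁ z₂ z₃)
        + (z₁ - z₃)⁻¹ • (P1 *ᵥ lv3 z₁ z₂ z₃ + P3 *ᵥ lv1 z₁ z₂ z₃) = 0 ∧
      (z₂ - z₁)⁻¹ • (P2 *ᵥ lv1 z₁ z₂ z₃ + P1 *ᵥ lv2 z₁ z₂ z₃)
        + (z₂ - z₃)⁻¹ • (P2 *ᵥ lv3 z₁ z₂ z₃ + P3 *ᵥ lv2 z₁ z₂ z₃) = 0 ∧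
      (z₃ - z₁)⁻¹ • (P3 *ᵥ lv1 z₁ z₂ z₃ + P1 *ᵥ lv3 z₁ z₂ z₃)
        + (z₃ - z₂)⁻¹ • (P3 *ᵥ lv2 z₁ z₂ z₃ + P2 *ᵥ lv3 z₁ z₂ z₃) = 0) := by
  have hp : z₂ - z₁ ≠ 0 := sub_ne_zero.2 (Ne.symm h12)
  have hq : z₃ - z₂ ≠ 0 := sub_ne_zero.2 (Ne.symm h23)
  have hr : z₁ - z₃ ≠ 0 := sub_ne_zero.2 h13
  have hp' : z₁ - z₂ ≠ 0 := sub_ne_zero.2 h12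
  have hq' : z₂ - z₃ ≠ 0 := sub_ne_zero.2 h23
  have hr' : z₃ - z₁ ≠ 0 := sub_ne_zero.2 (Ne.symm h13)
  have hd : dY4 z₁ z₂ z₃
      = -((z₂ - z₁) * ((z₂ - z₁) ^ 2 + (z₃ - z₂) * (z₁ - z₃))) / (z₃ - z₂) ^ 3 := by
    simp only [dY4, al1, al2, al3]
    field_simp
  have hb : bY4 z₁ z₂ z₃
      = (z₁ - z₃) * ((z₂ - z₁) ^ 2 + (z₃ - z₂) * (z₁ - z₃)) / (z₃ - z₂) ^ 3 := by
    simp only [bY4, hd, al1, al2, al3]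
    field_simp
  have ha : aY4 z₁ z₂ z₃ = -(z₂ - z₁) / (z₃ - z₂) := by
    simp only [aY4, al1, al3]
    field_simp
  have hc : cY4 z₁ z₂ z₃ = (z₁ - z₃) * (z₂ - z₁) / (z₃ - z₂) ^ 2 := by
    simp only [cY4, al1, al2, al3]
    field_simp
    try ring
  have he : eY4 z₁ z₂ z₃ = -(z₂ - z₁) / (z₃ - z₂) := by
    simp only [eY4, al1, al2]
    field_simp
    try ring
  have hl1 : lv1 z₁ z₂ z₃ = ![0, 0, (z₃ - z₂)⁻¹, -(z₂ - z₁) / (z₃ - z₂) ^ 2] := by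
    funext k
    fin_cases k <;>
      simp [lv1, ha, al1] <;>
      (field_simp; try ring; try tauto)
  have hl2 : lv2 z₁ z₂ z₃ =
      ![0, ((z₂ - z₁) ^ 2 + (z₃ - z₂) * (z₁ - z₃)) / (z₃ - z₂) ^ 3, 0,
        (z₂ - z₁) / (z₃ - z₂) ^ 2] := by
    funext k
    fin_cases k <;>
      simp [lv2, hb, hc, al2] <;>
      (field_simp; try ring; try tauto)
  have hl3 : lv3 z₁ z₂ z₃ =
      ![0, -((z₂ - z₁) ^ 2 + (z₃ - z₂) * (z₁ - z₃)) / (z₃ - z₂) ^ 3, -(z₃ - z₂)⁻¹, 0] := by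
    funext k
    fin_cases k <;>
      simp [lv3, hd, he, al3] <;>
      (field_simp; try ring; try tauto)
  refine ⟨⟨?_, ?_, ?_⟩, ?_, ?_, ?_⟩ <;>
  · funext i
    fin_cases i <;>
    · simp [P1, P2, P3, Matrix.sub_mulVec, Matrix.one_mulVec, permMat_mulVec,
        hl1, hl2, hl3, Equiv.swap_apply_def]
      try field_simp
      try ring
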